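/- Let f : [0,θ] → ℝ be Lipschitz continuous. Then Uf is Lipschitz continuous and s(Uf) ≤ q·s(f), where s(g) = sup_{x ≠ y} |g(x) − g(y)|/|x − y| denotes the least Lipschitz constant of g on [0,θ], and q = m·Σ_{i≥m} ( m/(i³(i+1)) + (i+1−m)/(i(i+1)³) ). -/

import Mathlib

open MeasureTheory Real Set

/-- θ = 1/√m. -/
noncomputable def theta (m : ℕ) : ℝ := 1 / Real.sqrt m

/-- u_i(x) = 1/(iθ + x). -/
noncomputable def uMap (m i : ℕ) (x : ℝ) : ℝ := 1 / (i * theta m + x)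

/-- P_i(x) = (1+θx)/((x+iθ)(x+(i+1)θ)). -/
noncomputable def Pfun (m i : ℕ) (x : ℝ) : ℝ :=
  (1 + theta m * x) / ((x + i * theta m) * (x + (i + 1) * theta m))

/-- The Perron-Frobenius operator Uf(x) = Σ_{i≥m} P_i(x)·f(u_i(x)). -/
noncomputable def Uop (m : ℕ) (f : ℝ → ℝ) (x : ℝ) : ℝ :=
  ∑' i : ℕ, Pfun m (i + m) x * f (uMap m (i + m) x)

/-- q = m·Σ_{i≥m} ( m/(i³(i+1)) + (i+1−m)/(i(i+1)³) ). -/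
noncomputable def qConst (m : ℕ) : ℝ :=
  m * ∑' i : ℕ,
    ((m : ℝ) / (((i + m : ℕ) : ℝ) ^ 3 * (((i + m : ℕ) : ℝ) + 1)) +
      ((((i + m : ℕ) : ℝ) + 1 - (m : ℝ)) /
        (((i + m : ℕ) : ℝ) * (((i + m : ℕ) : ℝ) + 1) ^ 3)))

/-!
Partial fractions give `P_i = Q_i - Q_{i+1}` with `Q_i(x) = (1 - iθ²) / (θ (x + iθ))`, and
`Q_m = 0` because `mθ² = 1`. Summation by parts therefore writes `Uf(x) - Uf(y)` as the series of
`P_i(x) (f(u_i x) - f(u_i y)) + (Q_{i+1}(x) - Q_{i+1}(y)) (f(u_{i+1} y) - f(u_i y))`, and the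
Lipschitz bound on `f` turns the modulus of this term into `K |x - y|` times a rational weight in
`x, y`. The weight is largest at `x = y = 0`, where it is `m` times the `i`-th summand of `q`.
-/

open Filter Topology

lemma theta_pos {m : ℕ} (hm : 0 < m) : 0 < theta m := by
  unfold theta; positivity

lemma natCast_mul_theta_sq {m : ℕ} (hm : 0 < m) : (m : ℝ) * theta m ^ 2 = 1 := by
  have : (0 : ℝ) < m := by exact_mod_cast hm
  rw [theta, div_pow, sq_sqrt this.le]
  field_simp

lemma one_le_natCast_mul_theta_sq {m i : ℕ} (hm : 0 < m) (hi : m ≤ i) :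
    1 ≤ (i : ℝ) * theta m ^ 2 := by
  rw [← natCast_mul_theta_sq hm]
  gcongr

lemma uMap_mem_Icc {m i : ℕ} {z : ℝ} (hm : 0 < m) (hi : m ≤ i) (hz : 0 ≤ z) :
    uMap m i z ∈ Icc 0 (theta m) := by
  have hθ := theta_pos hm
  have hiθ := one_le_natCast_mul_theta_sq hm hi
  have hden : 0 < (i : ℝ) * theta m + z := by nlinarith
  refine ⟨by unfold uMap; positivity, ?_⟩
  rw [uMap, div_le_iff₀ hden]
  nlinarith

lemma abs_one_div_sub_one_div {p q : ℝ} (hp : 0 < p) (hq : 0 < q) :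
    |1 / p - 1 / q| = |q - p| / (p * q) := by
  rw [div_sub_div _ _ hp.ne' hq.ne', abs_div, abs_of_pos (mul_pos hp hq)]
  ring_nf

lemma abs_le_abs_apply_zero_add_mul {f : ℝ → ℝ} {K r u : ℝ} (hK : 0 ≤ K)
    (hf : ∀ x ∈ Icc 0 r, ∀ y ∈ Icc 0 r, |f x - f y| ≤ K * |x - y|) (hu : u ∈ Icc 0 r) :
    |f u| ≤ |f 0| + K * r := by
  have h0 : (0 : ℝ) ∈ Icc 0 r := ⟨le_rfl, hu.1.trans hu.2⟩
  have hfu : |f u - f 0| ≤ K * r := by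
    calc |f u - f 0| ≤ K * |u - 0| := hf u hu 0 h0
      _ ≤ K * r := by rw [sub_zero, abs_of_nonneg hu.1]; gcongr; exact hu.2
  calc |f u| = |(f u - f 0) + f 0| := by ring_nf
    _ ≤ |f u - f 0| + |f 0| := abs_add_le _ _
    _ ≤ |f 0| + K * r := by linarith

lemma summable_of_abs_le_div_sq {F : ℕ → ℝ} (m : ℕ) (C : ℝ)
    (h : ∀ j, |F j| ≤ C / ((j + m : ℕ) : ℝ) ^ 2) : Summable F := by
  have hsq : Summable fun n : ℕ => C * (1 / (n : ℝ) ^ 2) :=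
    (Real.summable_one_div_nat_pow.2 one_lt_two).mul_left C
  refine Summable.of_norm_bounded ((summable_nat_add_iff m).2 hsq) fun j => ?_
  simpa [div_eq_mul_inv] using h j

lemma Pfun_nonneg {m i : ℕ} {z : ℝ} (hz : 0 ≤ z) : 0 ≤ Pfun m i z := by
  have : 0 ≤ theta m := by unfold theta; positivity
  unfold Pfun; positivity

lemma Pfun_le {m i : ℕ} {z : ℝ} (hm : 0 < m) (hi : 0 < i) (hz : z ∈ Icc 0 (theta m)) :
    Pfun m i z ≤ 2 * m / (i : ℝ) ^ 2 := by
  have hθ := theta_pos hm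
  have hmθ := natCast_mul_theta_sq hm
  have hm1 : (1 : ℝ) ≤ m := by exact_mod_cast hm
  have hi0 : (0 : ℝ) < i := by exact_mod_cast hi
  obtain ⟨hz0, hzθ⟩ := hz
  have hnum : 1 + theta m * z ≤ 2 := by nlinarith
  have hden : (i * theta m) * (i * theta m) ≤ (z + i * theta m) * (z + (i + 1) * theta m) := by
    gcongr <;> linarith
  calc Pfun m i z ≤ 2 / ((i * theta m) * (i * theta m)) := by
        unfold Pfun; gcongr
    _ = 2 * m / (i : ℝ) ^ 2 := by
        rw [div_eq_div_iff (by positivity) (by positivity)]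
        linear_combination (-2 * (i : ℝ) ^ 2) * hmθ

noncomputable def Qfun (m i : ℕ) (x : ℝ) : ℝ :=
  (1 - i * theta m ^ 2) / (theta m * (x + i * theta m))

lemma Pfun_eq_Qfun_sub_Qfun {m i : ℕ} {z : ℝ} (hm : 0 < m) (hi : 0 < i) (hz : 0 ≤ z) :
    Pfun m i z = Qfun m i z - Qfun m (i + 1) z := by
  have hθ := theta_pos hm
  have hi0 : (0 : ℝ) < i := by exact_mod_cast hi
  have h1 : 0 < z + i * theta m := by positivity
  have h2 : 0 < z + (i + 1) * theta m := by positivity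
  unfold Pfun Qfun
  push_cast
  field_simp
  ring

lemma Qfun_self {m : ℕ} (hm : 0 < m) (z : ℝ) : Qfun m m z = 0 := by
  rw [Qfun, natCast_mul_theta_sq hm, sub_self, zero_div]

lemma abs_Qfun_sub_Qfun {m i : ℕ} {x y : ℝ} (hm : 0 < m) (hi : m ≤ i) (hx : 0 ≤ x) (hy : 0 ≤ y) :
    |Qfun m i x - Qfun m i y|
      = |x - y| * ((i * theta m ^ 2 - 1) / (theta m * (x + i * theta m) * (y + i * theta m))) := by
  have hθ := theta_pos hm
  have hiθ := one_le_natCast_mul_theta_sq hm hi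
  have hi0 : (0 : ℝ) < i := by exact_mod_cast hm.trans_le hi
  have h1 : 0 < x + i * theta m := by positivity
  have h2 : 0 < y + i * theta m := by positivity
  have hdiff : Qfun m i x - Qfun m i y
      = (x - y) * ((i * theta m ^ 2 - 1) / (theta m * (x + i * theta m) * (y + i * theta m))) := by
    unfold Qfun
    field_simp
    ring
  have hnum : 0 ≤ (i : ℝ) * theta m ^ 2 - 1 := sub_nonneg.2 hiθ
  rw [hdiff, abs_mul, abs_of_nonneg (by positivity : 0 ≤ (i * theta m ^ 2 - 1) /
    (theta m * (x + i * theta m) * (y + i * theta m)))]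

lemma abs_Qfun_sub_Qfun_le {m i : ℕ} {x y : ℝ} (hm : 0 < m) (hi : m ≤ i) (hx : 0 ≤ x)
    (hy : 0 ≤ y) : |Qfun m i x - Qfun m i y| ≤ |x - y| / (theta m * i) := by
  have hθ := theta_pos hm
  have hiθ := one_le_natCast_mul_theta_sq hm hi
  have hi0 : (0 : ℝ) < i := by exact_mod_cast hm.trans_le hi
  rw [abs_Qfun_sub_Qfun hm hi hx hy, div_eq_mul_inv]
  refine mul_le_mul_of_nonneg_left ?_ (abs_nonneg _)
  calc (i * theta m ^ 2 - 1) / (theta m * (x + i * theta m) * (y + i * theta m))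
      ≤ (i * theta m ^ 2) / (theta m * (i * theta m) * (i * theta m)) := by
        gcongr <;> linarith
    _ = (theta m * i)⁻¹ := by field_simp

/-- With `a = iθ`, `b = (i + 1)θ`, `c = mθ`, the `i`-th summation-by-parts term is bounded by
`K |x - y| θ weightFun a b c x y`. -/
noncomputable def weightFun (a b c x y : ℝ) : ℝ :=
  (x + c) / ((x + a) ^ 2 * (x + b) * (y + a)) + (b - c) / ((x + b) * (y + b) ^ 2 * (y + a))

section weightFun

variable {θ a b c x y : ℝ}

lemma weightFun_le_weightFun_zero_right (hθ : 0 < θ) (hc : 2 * θ ≤ c) (hca : c ≤ a)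
    (hb : b = a + θ) (hx : 0 ≤ x) (hy : 0 ≤ y) : weightFun a b c x y ≤ weightFun a b c x 0 := by
  subst hb
  have ha : 0 < a := by linarith
  have hbc : 0 ≤ a + θ - c := by linarith
  have hxc : 0 ≤ x + c := by linarith
  unfold weightFun
  gcongr

lemma weightFun_zero_right_le_weightFun_zero (hθ : 0 < θ) (hc : 2 * θ ≤ c) (hca : c ≤ a)
    (hb : b = a + θ) (hx : 0 ≤ x) :
    weightFun a b c x 0 ≤ weightFun a b c 0 0 := by
  subst hb
  have ha : 0 < a := by linarith
  have hc0 : 0 < c := by linarith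
  have hbc : 0 < a + θ - c := by linarith
  set N := (a + θ - c) * a ^ 2 * ((x + a) ^ 2 - (a + θ) ^ 2) + (a + θ) ^ 2 * c * x ^ 2
    + (a + θ) ^ 2 * c * (3 * a + θ) * x + 2 * a * (a + θ) ^ 3 * c
  have hdiff : weightFun a (a + θ) c 0 0 - weightFun a (a + θ) c x 0
      = x * N / (a ^ 3 * (a + θ) ^ 3 * (x + a) ^ 2 * (x + (a + θ))) := by
    unfold weightFun
    field_simp
    ring
  -- Only the first summand of `N` can be negative; it is controlled because `θ ≤ a / 2`.
  have hsq : (a + θ) ^ 2 - (x + a) ^ 2 ≤ 3 * θ * a := by nlinarith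
  have hcube : a ^ 2 * (a + θ - c) ≤ (a + θ) ^ 3 := by
    calc a ^ 2 * (a + θ - c) ≤ (a + θ) ^ 2 * (a + θ) := by gcongr <;> linarith
      _ = (a + θ) ^ 3 := by ring
  have hneg : (a + θ - c) * a ^ 2 * ((a + θ) ^ 2 - (x + a) ^ 2) ≤ 2 * a * (a + θ) ^ 3 * c := by
    calc (a + θ - c) * a ^ 2 * ((a + θ) ^ 2 - (x + a) ^ 2)
        ≤ (a + θ - c) * a ^ 2 * (3 * θ * a) := by gcongr
      _ = 3 * θ * a * (a ^ 2 * (a + θ - c)) := by ring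
      _ ≤ 2 * c * a * (a + θ) ^ 3 :=
          mul_le_mul (by nlinarith) hcube (by positivity) (by positivity)
      _ = 2 * a * (a + θ) ^ 3 * c := by ring
  have hN0 : 0 ≤ N := by
    have : 0 ≤ (a + θ) ^ 2 * c * x ^ 2 + (a + θ) ^ 2 * c * (3 * a + θ) * x := by positivity
    linarith
  have : 0 ≤ x * N / (a ^ 3 * (a + θ) ^ 3 * (x + a) ^ 2 * (x + (a + θ))) := by positivity
  linarith

lemma weightFun_le_weightFun_zero (hθ : 0 < θ) (hc : 2 * θ ≤ c) (hca : c ≤ a)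
    (hb : b = a + θ) (hx : 0 ≤ x) (hy : 0 ≤ y) :
    weightFun a b c x y ≤ weightFun a b c 0 0 :=
  (weightFun_le_weightFun_zero_right hθ hc hca hb hx hy).trans
    (weightFun_zero_right_le_weightFun_zero hθ hc hca hb hx)

end weightFun

noncomputable def qTerm (m i : ℕ) : ℝ :=
  (m : ℝ) / ((i : ℝ) ^ 3 * ((i : ℝ) + 1)) + ((i : ℝ) + 1 - m) / ((i : ℝ) * ((i : ℝ) + 1) ^ 3)

lemma qTerm_nonneg {m i : ℕ} (hi : m ≤ i) : 0 ≤ qTerm m i := by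
  have : (m : ℝ) ≤ i := by exact_mod_cast hi
  have : 0 ≤ (i : ℝ) + 1 - m := by linarith
  unfold qTerm; positivity

lemma qTerm_le {m i : ℕ} (hm : 0 < m) (hi : m ≤ i) : qTerm m i ≤ 2 / (i : ℝ) ^ 2 := by
  have hmi : (m : ℝ) ≤ i := by exact_mod_cast hi
  have hi1 : (1 : ℝ) ≤ i := by exact_mod_cast hm.trans_le hi
  have h1 : (m : ℝ) / ((i : ℝ) ^ 3 * ((i : ℝ) + 1)) ≤ 1 / (i : ℝ) ^ 2 := by
    rw [div_le_div_iff₀ (by positivity) (by positivity)]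
    nlinarith [pow_pos (by linarith : (0 : ℝ) < i) 3]
  have h2 : ((i : ℝ) + 1 - m) / ((i : ℝ) * ((i : ℝ) + 1) ^ 3) ≤ 1 / (i : ℝ) ^ 2 := by
    rw [div_le_div_iff₀ (by positivity) (by positivity)]
    nlinarith [pow_pos (by linarith : (0 : ℝ) < i) 3]
  calc qTerm m i ≤ 1 / (i : ℝ) ^ 2 + 1 / (i : ℝ) ^ 2 := add_le_add h1 h2
    _ = 2 / (i : ℝ) ^ 2 := by ring

lemma theta_mul_weightFun_zero {m i : ℕ} (hm : 0 < m) (hi : 0 < i) :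
    theta m * weightFun (i * theta m) ((i + 1) * theta m) (m * theta m) 0 0 = m * qTerm m i := by
  have hθ := theta_pos hm
  have hmθ := natCast_mul_theta_sq hm
  have hi0 : (0 : ℝ) < i := by exact_mod_cast hi
  unfold weightFun qTerm
  simp only [zero_add]
  field_simp
  linear_combination (-((i : ℝ) ^ 3 + (i : ℝ) ^ 2 + 2 * m * i + m)) * hmθ

noncomputable def UopSubTerm (m : ℕ) (f : ℝ → ℝ) (x y : ℝ) (i : ℕ) : ℝ :=
  Pfun m i x * (f (uMap m i x) - f (uMap m i y))
    + (Qfun m (i + 1) x - Qfun m (i + 1) y) * (f (uMap m (i + 1) y) - f (uMap m i y))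

section UopSubTerm

variable {m i : ℕ} {f : ℝ → ℝ} {K x y : ℝ}

lemma abs_comp_uMap_sub_le (hm : 0 < m) (hi : m ≤ i)
    (hf : ∀ u ∈ Icc 0 (theta m), ∀ v ∈ Icc 0 (theta m), |f u - f v| ≤ K * |u - v|)
    (hx : 0 ≤ x) (hy : 0 ≤ y) :
    |f (uMap m i x) - f (uMap m i y)|
      ≤ K * (|x - y| / ((i * theta m + x) * (i * theta m + y))) := by
  have hθ := theta_pos hm
  have hi0 : (0 : ℝ) < i := by exact_mod_cast hm.trans_le hi
  refine (hf _ (uMap_mem_Icc hm hi hx) _ (uMap_mem_Icc hm hi hy)).trans_eq ?_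
  rw [uMap, uMap, abs_one_div_sub_one_div (by positivity) (by positivity), abs_sub_comm]
  ring_nf

lemma abs_comp_uMap_succ_sub_le (hm : 0 < m) (hi : m ≤ i)
    (hf : ∀ u ∈ Icc 0 (theta m), ∀ v ∈ Icc 0 (theta m), |f u - f v| ≤ K * |u - v|)
    (hy : 0 ≤ y) :
    |f (uMap m (i + 1) y) - f (uMap m i y)|
      ≤ K * (theta m / (((i + 1) * theta m + y) * (i * theta m + y))) := by
  have hθ := theta_pos hm
  have hi0 : (0 : ℝ) < i := by exact_mod_cast hm.trans_le hi
  refine (hf _ (uMap_mem_Icc hm (hi.trans i.le_succ) hy) _ (uMap_mem_Icc hm hi hy)).trans_eq ?_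
  rw [uMap, uMap, abs_one_div_sub_one_div (by positivity) (by positivity)]
  push_cast
  rw [show i * theta m + y - ((i + 1) * theta m + y) = -theta m by ring, abs_neg,
    abs_of_pos hθ]

lemma abs_UopSubTerm_le_weightFun (hm : 0 < m) (hi : m ≤ i)
    (hf : ∀ u ∈ Icc 0 (theta m), ∀ v ∈ Icc 0 (theta m), |f u - f v| ≤ K * |u - v|)
    (hx : 0 ≤ x) (hy : 0 ≤ y) :
    |UopSubTerm m f x y i| ≤ K * |x - y| *
      (theta m * weightFun (i * theta m) ((i + 1) * theta m) (m * theta m) x y) := by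
  have hθ := theta_pos hm
  have hmθ := natCast_mul_theta_sq hm
  have hi0 : (0 : ℝ) < i := by exact_mod_cast hm.trans_le hi
  have hD := abs_Qfun_sub_Qfun (i := i + 1) hm (hi.trans i.le_succ) hx hy
  push_cast at hD
  have hPnum : 1 + theta m * x = theta m * (x + m * theta m) := by linear_combination -hmθ
  have hDnum : ((i : ℝ) + 1) * theta m ^ 2 - 1 = theta m * ((i + 1) * theta m - m * theta m) := by
    linear_combination hmθ
  calc |UopSubTerm m f x y i|
      ≤ Pfun m i x * |f (uMap m i x) - f (uMap m i y)|
        + |Qfun m (i + 1) x - Qfun m (i + 1) y| * |f (uMap m (i + 1) y) - f (uMap m i y)| := by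
        rw [UopSubTerm]
        refine (abs_add_le _ _).trans_eq ?_
        rw [abs_mul, abs_mul, abs_of_nonneg (Pfun_nonneg hx)]
    _ ≤ Pfun m i x * (K * (|x - y| / ((i * theta m + x) * (i * theta m + y))))
        + |Qfun m (i + 1) x - Qfun m (i + 1) y|
          * (K * (theta m / (((i + 1) * theta m + y) * (i * theta m + y)))) := by
        gcongr
        · exact Pfun_nonneg hx
        · exact abs_comp_uMap_sub_le hm hi hf hx hy
        · exact abs_comp_uMap_succ_sub_le hm hi hf hy
    _ = K * |x - y| *
        (theta m * weightFun (i * theta m) ((i + 1) * theta m) (m * theta m) x y) := by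
        rw [hD, Pfun, weightFun, hPnum, hDnum]
        field_simp
        ring

lemma abs_UopSubTerm_le (hm : 2 ≤ m) (hi : m ≤ i) (hK : 0 ≤ K)
    (hf : ∀ u ∈ Icc 0 (theta m), ∀ v ∈ Icc 0 (theta m), |f u - f v| ≤ K * |u - v|)
    (hx : 0 ≤ x) (hy : 0 ≤ y) :
    |UopSubTerm m f x y i| ≤ K * |x - y| * (m * qTerm m i) := by
  have hm0 : 0 < m := by omega
  have hθ := theta_pos hm0
  have hm2 : (2 : ℝ) ≤ m := by exact_mod_cast hm
  have hmi : (m : ℝ) ≤ i := by exact_mod_cast hi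
  rw [← theta_mul_weightFun_zero hm0 (hm0.trans_le hi)]
  refine (abs_UopSubTerm_le_weightFun hm0 hi hf hx hy).trans ?_
  gcongr
  exact weightFun_le_weightFun_zero hθ (by nlinarith) (by nlinarith) (by ring) hx hy

end UopSubTerm

lemma tsum_eq_tsum_add_of_eq_add_sub_succ {G : Type*} [AddCommGroup G] [TopologicalSpace G]
    [IsTopologicalAddGroup G] [T2Space G] {t g E : ℕ → G} (ht : Summable t) (hg : Summable g)
    (htg : ∀ n, t n = g n + (E n - E (n + 1))) (hE : Tendsto E atTop (𝓝 0)) :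
    ∑' n, t n = ∑' n, g n + E 0 := by
  have hpartial : ∀ n, ∑ i ∈ Finset.range n, t i = ∑ i ∈ Finset.range n, g i + (E 0 - E n) := by
    intro n
    simp only [htg, Finset.sum_add_distrib, Finset.sum_range_sub']
  refine tendsto_nhds_unique ht.hasSum.tendsto_sum_nat ?_
  simp only [hpartial]
  simpa using hg.hasSum.tendsto_sum_nat.add (tendsto_const_nhds.sub hE)

section Summation

variable {m : ℕ} {f : ℝ → ℝ} {K x y : ℝ}

lemma summable_qTerm (hm : 0 < m) : Summable fun j => qTerm m (j + m) :=
  summable_of_abs_le_div_sq m 2 fun j => by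
    rw [abs_of_nonneg (qTerm_nonneg (Nat.le_add_left m j))]
    exact qTerm_le hm (Nat.le_add_left m j)

lemma summable_Pfun_mul (hm : 0 < m) (hK : 0 ≤ K)
    (hf : ∀ u ∈ Icc 0 (theta m), ∀ v ∈ Icc 0 (theta m), |f u - f v| ≤ K * |u - v|)
    (hx : x ∈ Icc 0 (theta m)) :
    Summable fun j => Pfun m (j + m) x * f (uMap m (j + m) x) := by
  refine summable_of_abs_le_div_sq m (2 * m * (|f 0| + K * theta m)) fun j => ?_
  have hj : m ≤ j + m := Nat.le_add_left m j
  rw [abs_mul, abs_of_nonneg (Pfun_nonneg hx.1), mul_div_right_comm]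
  exact mul_le_mul (Pfun_le hm (hm.trans_le hj) hx)
    (abs_le_abs_apply_zero_add_mul hK hf (uMap_mem_Icc hm hj hx.1)) (abs_nonneg _) (by positivity)

lemma summable_UopSubTerm (hm : 2 ≤ m) (hK : 0 ≤ K)
    (hf : ∀ u ∈ Icc 0 (theta m), ∀ v ∈ Icc 0 (theta m), |f u - f v| ≤ K * |u - v|)
    (hx : 0 ≤ x) (hy : 0 ≤ y) :
    Summable fun j => UopSubTerm m f x y (j + m) := by
  refine summable_of_abs_le_div_sq m (K * |x - y| * (m * 2)) fun j => ?_
  have hj : m ≤ j + m := Nat.le_add_left m j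
  refine (abs_UopSubTerm_le hm hj hK hf hx hy).trans ?_
  rw [mul_div_assoc, mul_div_assoc]
  gcongr
  exact qTerm_le (by omega) hj

lemma tendsto_Qfun_sub_Qfun_mul (hm : 0 < m) (hK : 0 ≤ K)
    (hf : ∀ u ∈ Icc 0 (theta m), ∀ v ∈ Icc 0 (theta m), |f u - f v| ≤ K * |u - v|)
    (hx : 0 ≤ x) (hy : y ∈ Icc 0 (theta m)) :
    Tendsto (fun j => (Qfun m (j + m) x - Qfun m (j + m) y) * f (uMap m (j + m) y))
      atTop (𝓝 0) := by
  set C := |x - y| / theta m * (|f 0| + K * theta m)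
  have hbound : ∀ j : ℕ, ‖(Qfun m (j + m) x - Qfun m (j + m) y) * f (uMap m (j + m) y)‖
      ≤ C / ((j + m : ℕ) : ℝ) := by
    intro j
    have hj : m ≤ j + m := Nat.le_add_left m j
    rw [Real.norm_eq_abs, abs_mul]
    calc _ ≤ |x - y| / (theta m * (j + m : ℕ)) * (|f 0| + K * theta m) :=
          mul_le_mul (abs_Qfun_sub_Qfun_le hm hj hx hy.1)
            (abs_le_abs_apply_zero_add_mul hK hf (uMap_mem_Icc hm hj hy.1)) (abs_nonneg _)
            (by have := theta_pos hm; positivity)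
      _ = C / ((j + m : ℕ) : ℝ) := by ring
  refine squeeze_zero_norm hbound ?_
  exact (tendsto_const_div_atTop_nhds_zero_nat C).comp (tendsto_add_atTop_nat m)

end Summation

lemma Pfun_mul_sub_Pfun_mul {m i : ℕ} {f : ℝ → ℝ} {x y : ℝ} (hm : 0 < m) (hi : 0 < i)
    (hx : 0 ≤ x) (hy : 0 ≤ y) :
    Pfun m i x * f (uMap m i x) - Pfun m i y * f (uMap m i y)
      = UopSubTerm m f x y i + ((Qfun m i x - Qfun m i y) * f (uMap m i y)
        - (Qfun m (i + 1) x - Qfun m (i + 1) y) * f (uMap m (i + 1) y)) := by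
  rw [UopSubTerm, Pfun_eq_Qfun_sub_Qfun hm hi hx, Pfun_eq_Qfun_sub_Qfun hm hi hy]
  ring

lemma Uop_sub_Uop_eq_tsum {m : ℕ} {f : ℝ → ℝ} {K x y : ℝ} (hm : 2 ≤ m) (hK : 0 ≤ K)
    (hf : ∀ u ∈ Icc 0 (theta m), ∀ v ∈ Icc 0 (theta m), |f u - f v| ≤ K * |u - v|)
    (hx : x ∈ Icc 0 (theta m)) (hy : y ∈ Icc 0 (theta m)) :
    Uop m f x - Uop m f y = ∑' j, UopSubTerm m f x y (j + m) := by
  have hm0 : 0 < m := by omega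
  have hsx := summable_Pfun_mul hm0 hK hf hx
  have hsy := summable_Pfun_mul hm0 hK hf hy
  rw [Uop, Uop, ← hsx.tsum_sub hsy,
    tsum_eq_tsum_add_of_eq_add_sub_succ (hsx.sub hsy) (summable_UopSubTerm hm hK hf hx.1 hy.1)
      (fun j => ?_) (tendsto_Qfun_sub_Qfun_mul hm0 hK hf hx.1 hy)]
  · simp [Qfun_self hm0]
  · rw [Nat.add_right_comm j 1 m]
    exact Pfun_mul_sub_Pfun_mul hm0 (by omega) hx.1 hy.1

theorem Uop_lipschitz_contraction_general (m : ℕ) (hm : 2 ≤ m)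
    (f : ℝ → ℝ) (K : ℝ) (hK : 0 ≤ K)
    (hf : ∀ x ∈ Icc 0 (theta m), ∀ y ∈ Icc 0 (theta m), |f x - f y| ≤ K * |x - y|) :
    ∀ x ∈ Icc 0 (theta m), ∀ y ∈ Icc 0 (theta m),
      |Uop m f x - Uop m f y| ≤ qConst m * K * |x - y| := by
  intro x hx y hy
  have hqConst : qConst m = m * ∑' j, qTerm m (j + m) := rfl
  have hq : HasSum (fun j => K * |x - y| * (m * qTerm m (j + m))) (qConst m * K * |x - y|) := by
    have h := ((summable_qTerm (m := m) (by omega)).hasSum.mul_left (m : ℝ)).mul_left (K * |x - y|)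
    rwa [← hqConst, show K * |x - y| * qConst m = qConst m * K * |x - y| by ring] at h
  rw [Uop_sub_Uop_eq_tsum hm hK hf hx hy]
  exact tsum_of_norm_bounded (f := fun j => UopSubTerm m f x y (j + m)) hq
    fun j => abs_UopSubTerm_le hm (Nat.le_add_left m j) hK hf hx.1 hy.1

/-- If f is Lipschitz on [0,θ] with constant K, then Uf is Lipschitz with
constant q·K; that is, s(Uf) ≤ q·s(f). -/
theorem Uop_lipschitz_contraction (m : ℕ) (hm : 2 ≤ m) (hns : ¬ IsSquare m)
    (f : ℝ → ℝ) (K : ℝ) (hK : 0 ≤ K)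
    (hf : ∀ x ∈ Icc 0 (theta m), ∀ y ∈ Icc 0 (theta m), |f x - f y| ≤ K * |x - y|) :
    ∀ x ∈ Icc 0 (theta m), ∀ y ∈ Icc 0 (theta m),
      |Uop m f x - Uop m f y| ≤ qConst m * K * |x - y| :=
  Uop_lipschitz_contraction_general m hm f K hK hf
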